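/- In an associative algebra with q-bracket [a,b]_q = ab - q·ba, the iterated q-bracket [x_1,[x_2,[...,[x_{n-1},x_n]_q ...]_q]_q equals Σ_{σ ∈ U_n} (-q)^{des(σ)} x_{σ(1)} ··· x_{σ(n)}. -/

import Mathlib

/-- A permutation of `Fin n` is unimodal if it strictly increases up to some
position `m` and strictly decreases afterwards. -/
def Unimodal {n : ℕ} (σ : Equiv.Perm (Fin n)) : Prop :=
  ∃ m : Fin n, StrictMonoOn σ {i | i ≤ m} ∧ StrictAntiOn σ {i | m ≤ i}

/-- The descent set: positions `i` (0-indexed, with `i+1 < n`) with `σ i > σ (i+1)`. -/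
def descents {n : ℕ} (σ : Equiv.Perm (Fin n)) : Finset (Fin n) :=
  Finset.univ.filter (fun i => ∃ j : Fin n, (j : ℕ) = (i : ℕ) + 1 ∧ σ j < σ i)

/-- The number of descents. -/
def desNum {n : ℕ} (σ : Equiv.Perm (Fin n)) : ℕ := (descents σ).card

/-- The iterated `q`-bracket `[a₁,[a₂,[…]_q]_q]_q` where `[a,b]_q = ab - q·ba`. -/
def iterQBracket {A : Type*} [Ring A] (q : A) : List A → A
  | [] => 0
  | [a] => a
  | a :: l => a * iterQBracket q l - q * (iterQBracket q l * a)

open Equiv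

section Ext
variable {n : ℕ}
def extL (τ : Equiv.Perm (Fin (n+1))) : Equiv.Perm (Fin (n+2)) :=
  Equiv.Perm.decomposeFin.symm (0, τ)
@[simp] lemma extL_zero (τ : Equiv.Perm (Fin (n+1))) : extL τ 0 = 0 :=
  Equiv.Perm.decomposeFin_symm_apply_zero _ _
@[simp] lemma extL_succ (τ : Equiv.Perm (Fin (n+1))) (i : Fin (n+1)) :
    extL τ i.succ = (τ i).succ := by
  simp [extL, Equiv.Perm.decomposeFin_symm_apply_succ]
def extR (τ : Equiv.Perm (Fin (n+1))) : Equiv.Perm (Fin (n+2)) :=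
  extL τ * finRotate (n+2)
@[simp] lemma extR_castSucc (τ : Equiv.Perm (Fin (n+1))) (i : Fin (n+1)) :
    extR τ i.castSucc = (τ i).succ := by
  have h : finRotate (n+2) i.castSucc = i.succ := by
    rw [finRotate_succ_apply]; ext
    simp [Fin.val_add_one, Fin.ext_iff, (Fin.castSucc_lt_last i).ne]
  show extL τ (finRotate (n+2) i.castSucc) = _
  rw [h, extL_succ]
@[simp] lemma extR_last (τ : Equiv.Perm (Fin (n+1))) :
    extR τ (Fin.last (n+1)) = 0 := by
  show extL τ (finRotate (n+2) (Fin.last (n+1))) = _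
  rw [finRotate_last, extL_zero]
end Ext

section Uni
variable {n : ℕ}

lemma unimodal_extL (τ : Equiv.Perm (Fin (n+1))) : Unimodal (extL τ) ↔ Unimodal τ := by
  constructor
  · rintro ⟨M, h1, h2⟩
    have hM0 : M ≠ 0 := by
      rintro rfl
      have := h2 (by simp [Fin.zero_le]) (show (1 : Fin (n+2)) ∈ {i | 0 ≤ i} by simp [Fin.zero_le])
        (show (0 : Fin (n+2)) < 1 by simp [Fin.lt_def])
      rw [show (1 : Fin (n+2)) = Fin.succ 0 by rfl, extL_succ, extL_zero] at this
      exact absurd this (Fin.not_lt_zero _).elim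
    refine ⟨M.pred hM0, ?_, ?_⟩
    · intro i hi j hj hij
      have hi' : i.succ ≤ M := by
        rw [← Fin.succ_pred M hM0]; exact Fin.succ_le_succ_iff.mpr hi
      have hj' : j.succ ≤ M := by
        rw [← Fin.succ_pred M hM0]; exact Fin.succ_le_succ_iff.mpr hj
      have := h1 hi' hj' (Fin.succ_lt_succ_iff.mpr hij)
      rwa [extL_succ, extL_succ, Fin.succ_lt_succ_iff] at this
    · intro i hi j hj hij
      have hi' : M ≤ i.succ := by
        rw [← Fin.succ_pred M hM0]; exact Fin.succ_le_succ_iff.mpr hi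
      have hj' : M ≤ j.succ := by
        rw [← Fin.succ_pred M hM0]; exact Fin.succ_le_succ_iff.mpr hj
      have := h2 hi' hj' (Fin.succ_lt_succ_iff.mpr hij)
      rwa [extL_succ, extL_succ, Fin.succ_lt_succ_iff] at this
  · rintro ⟨m, h1, h2⟩
    refine ⟨m.succ, ?_, ?_⟩
    · intro i hi j hj hij
      rcases Fin.eq_zero_or_eq_succ j with rfl | ⟨j', rfl⟩
      · exact absurd hij (Fin.not_lt_zero _).elim
      rcases Fin.eq_zero_or_eq_succ i with rfl | ⟨i', rfl⟩
      · rw [extL_zero, extL_succ]; exact Fin.succ_pos _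
      · rw [extL_succ, extL_succ, Fin.succ_lt_succ_iff]
        exact h1 (Fin.succ_le_succ_iff.mp hi) (Fin.succ_le_succ_iff.mp hj)
          (Fin.succ_lt_succ_iff.mp hij)
    · intro i hi j hj hij
      have hi0 : i ≠ 0 := by
        rintro rfl
        exact (Fin.succ_pos m).not_ge hi
      have hj0 : j ≠ 0 := by
        rintro rfl
        exact absurd hij (Fin.not_lt_zero _).elim
      obtain ⟨i', rfl⟩ := (Fin.eq_zero_or_eq_succ i).resolve_left hi0
      obtain ⟨j', rfl⟩ := (Fin.eq_zero_or_eq_succ j).resolve_left hj0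
      rw [extL_succ, extL_succ, Fin.succ_lt_succ_iff]
      exact h2 (Fin.succ_le_succ_iff.mp hi) (Fin.succ_le_succ_iff.mp hj)
        (Fin.succ_lt_succ_iff.mp hij)
end Uni

section Uni2
variable {n : ℕ}

lemma unimodal_extR (τ : Equiv.Perm (Fin (n+1))) : Unimodal (extR τ) ↔ Unimodal τ := by
  constructor
  · rintro ⟨M, h1, h2⟩
    have hML : M ≠ Fin.last (n+1) := by
      rintro rfl
      have := h1 (show (0 : Fin (n+2)) ∈ {i | i ≤ Fin.last (n+1)} from Fin.le_last _)
        (show Fin.last (n+1) ∈ {i | i ≤ Fin.last (n+1)} from Set.mem_setOf_eq ▸ le_refl _)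
        (show (0 : Fin (n+2)) < Fin.last (n+1) by simp [Fin.lt_def])
      rw [extR_last] at this
      exact absurd this (Fin.not_lt_zero _).elim
    obtain ⟨m, rfl⟩ := (Fin.eq_castSucc_or_eq_last M).resolve_right hML
    refine ⟨m, ?_, ?_⟩
    · intro i hi j hj hij
      have := h1 (Fin.castSucc_le_castSucc_iff.mpr hi) (Fin.castSucc_le_castSucc_iff.mpr hj)
        (Fin.castSucc_lt_castSucc_iff.mpr hij)
      rwa [extR_castSucc, extR_castSucc, Fin.succ_lt_succ_iff] at this
    · intro i hi j hj hij
      have := h2 (Fin.castSucc_le_castSucc_iff.mpr hi) (Fin.castSucc_le_castSucc_iff.mpr hj)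
        (Fin.castSucc_lt_castSucc_iff.mpr hij)
      rwa [extR_castSucc, extR_castSucc, Fin.succ_lt_succ_iff] at this
  · rintro ⟨m, h1, h2⟩
    refine ⟨m.castSucc, ?_, ?_⟩
    · intro i hi j hj hij
      obtain ⟨j', rfl⟩ := (Fin.eq_castSucc_or_eq_last j).resolve_right
        (by rintro rfl; exact (Fin.castSucc_lt_last m).not_ge hj)
      obtain ⟨i', rfl⟩ := (Fin.eq_castSucc_or_eq_last i).resolve_right
        (by rintro rfl; exact (Fin.castSucc_lt_last m).not_ge hi)
      rw [extR_castSucc, extR_castSucc, Fin.succ_lt_succ_iff]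
      exact h1 (Fin.castSucc_le_castSucc_iff.mp hi) (Fin.castSucc_le_castSucc_iff.mp hj)
        (Fin.castSucc_lt_castSucc_iff.mp hij)
    · intro i hi j hj hij
      rcases Fin.eq_castSucc_or_eq_last j with ⟨j', rfl⟩ | rfl
      · obtain ⟨i', rfl⟩ := (Fin.eq_castSucc_or_eq_last i).resolve_right
          (by rintro rfl; exact (hij.trans (Fin.castSucc_lt_last j')).false.elim)
        rw [extR_castSucc, extR_castSucc, Fin.succ_lt_succ_iff]
        exact h2 (Fin.castSucc_le_castSucc_iff.mp hi) (Fin.castSucc_le_castSucc_iff.mp hj)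
          (Fin.castSucc_lt_castSucc_iff.mp hij)
      · obtain ⟨i', rfl⟩ := (Fin.eq_castSucc_or_eq_last i).resolve_right
          (by rintro rfl; exact hij.false.elim)
        rw [extR_castSucc, extR_last]
        exact Fin.succ_pos _

end Uni2
section Des
variable {n : ℕ}

lemma mem_descents {σ : Equiv.Perm (Fin n)} {i : Fin n} :
    i ∈ descents σ ↔ ∃ j : Fin n, (j : ℕ) = (i : ℕ) + 1 ∧ σ j < σ i := by
  simp [descents]

lemma descents_extL (τ : Equiv.Perm (Fin (n+1))) :
    descents (extL τ) = (descents τ).map (Fin.succEmb (n+1)) := by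
  ext i
  rw [mem_descents, Finset.mem_map]
  constructor
  · rintro ⟨j, hj, hlt⟩
    have hi0 : i ≠ 0 := by
      rintro rfl; rw [extL_zero] at hlt; exact Fin.not_lt_zero _ hlt
    obtain ⟨i', rfl⟩ := (Fin.eq_zero_or_eq_succ i).resolve_left hi0
    have hj0 : j ≠ 0 := by
      rintro rfl; rw [Fin.val_zero, Fin.val_succ] at hj; omega
    obtain ⟨j', rfl⟩ := (Fin.eq_zero_or_eq_succ j).resolve_left hj0
    rw [extL_succ, extL_succ, Fin.succ_lt_succ_iff] at hlt
    refine ⟨i', mem_descents.mpr ⟨j', ?_, hlt⟩, rfl⟩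
    simp only [Fin.val_succ] at hj ⊢; omega
  · rintro ⟨i', hi', rfl⟩
    obtain ⟨j', hj', hlt⟩ := mem_descents.mp hi'
    refine ⟨j'.succ, by simp [Fin.val_succ, hj'], ?_⟩
    rw [show (Fin.succEmb (n+1)) i' = i'.succ from rfl, extL_succ, extL_succ,
      Fin.succ_lt_succ_iff]
    exact hlt

lemma desNum_extL (τ : Equiv.Perm (Fin (n+1))) : desNum (extL τ) = desNum τ := by
  rw [desNum, descents_extL, Finset.card_map]; rfl

lemma descents_extR (τ : Equiv.Perm (Fin (n+1))) :
    descents (extR τ) =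
      insert (Fin.castSucc (Fin.last n)) ((descents τ).map Fin.castSuccEmb) := by
  ext i
  rw [mem_descents, Finset.mem_insert, Finset.mem_map]
  constructor
  · rintro ⟨j, hj, hlt⟩
    have hiL : i ≠ Fin.last (n+1) := by
      rintro rfl
      simp only [Fin.val_last] at hj
      omega
    obtain ⟨i', rfl⟩ := (Fin.eq_castSucc_or_eq_last i).resolve_right hiL
    by_cases hi'L : i' = Fin.last n
    · subst hi'L; exact Or.inl rfl
    · refine Or.inr ⟨i', ?_, rfl⟩
      have hi'lt : (i' : ℕ) < n := by
        rcases Fin.eq_castSucc_or_eq_last i' with ⟨i'', rfl⟩ | rfl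
        · exact i''.isLt
        · exact absurd rfl hi'L
      have hjL : j ≠ Fin.last (n+1) := by
        rintro rfl
        simp only [Fin.val_last, Fin.coe_castSucc] at hj
        omega
      obtain ⟨j', rfl⟩ := (Fin.eq_castSucc_or_eq_last j).resolve_right hjL
      rw [extR_castSucc, extR_castSucc, Fin.succ_lt_succ_iff] at hlt
      refine mem_descents.mpr ⟨j', ?_, hlt⟩
      simpa using hj
  · rintro (rfl | ⟨i', hi', rfl⟩)
    · refine ⟨Fin.last (n+1), by simp, ?_⟩
      rw [extR_last, extR_castSucc]
      exact Fin.succ_pos _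
    · obtain ⟨j', hj', hlt⟩ := mem_descents.mp hi'
      refine ⟨j'.castSucc, by simpa using hj', ?_⟩
      rw [show (Fin.castSuccEmb i' : Fin (n+2)) = i'.castSucc from rfl,
        extR_castSucc, extR_castSucc, Fin.succ_lt_succ_iff]
      exact hlt

lemma desNum_extR (τ : Equiv.Perm (Fin (n+1))) : desNum (extR τ) = desNum τ + 1 := by
  have hnm : Fin.castSucc (Fin.last n) ∉ (descents τ).map Fin.castSuccEmb := by
    intro hmem
    obtain ⟨i', hi', heq⟩ := Finset.mem_map.mp hmem
    have : i' = Fin.last n := Fin.castSucc_injective _ heq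
    subst this
    obtain ⟨j', hj', -⟩ := mem_descents.mp hi'
    have := j'.isLt
    simp only [Fin.val_last] at hj'
    omega
  rw [desNum, descents_extR, Finset.card_insert_of_notMem hnm, Finset.card_map]
  rfl

lemma unimodal_ends {σ : Equiv.Perm (Fin (n+2))} (h : Unimodal σ) :
    σ 0 = 0 ∨ σ (Fin.last (n+1)) = 0 := by
  obtain ⟨M, h1, h2⟩ := h
  set k := σ.symm 0 with hk
  have hσk : σ k = 0 := σ.apply_symm_apply 0
  rcases le_total k M with hkM | hMk
  · by_cases hk0 : k = 0
    · left; exact hk0 ▸ hσk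
    · have := h1 (show (0:Fin (n+2)) ∈ {i | i ≤ M} from Fin.zero_le M)
        (show k ∈ {i | i ≤ M} from hkM) (Fin.pos_of_ne_zero hk0)
      rw [hσk] at this
      exact absurd this (Fin.not_lt_zero _).elim
  · by_cases hkL : k = Fin.last (n+1)
    · right; exact hkL ▸ hσk
    · have := h2 (show k ∈ {i | M ≤ i} from hMk)
        (show Fin.last (n+1) ∈ {i | M ≤ i} from le_trans hMk (Fin.le_last k))
        (lt_of_le_of_ne (Fin.le_last k) hkL)
      rw [hσk] at this
      exact absurd this (Fin.not_lt_zero _).elim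

end Des

section Bij
variable {n : ℕ}

lemma decompose_extL (τ : Equiv.Perm (Fin (n+1))) :
    (Equiv.Perm.decomposeFin (extL τ)).2 = τ := by
  rw [extL, Equiv.apply_symm_apply]

lemma extL_decompose {σ : Equiv.Perm (Fin (n+2))} (h : σ 0 = 0) :
    extL (Equiv.Perm.decomposeFin σ).2 = σ := by
  have h1 : (Equiv.Perm.decomposeFin σ).1 = 0 := by
    have h2 := Equiv.Perm.decomposeFin_symm_apply_zero
      (Equiv.Perm.decomposeFin σ).1 (Equiv.Perm.decomposeFin σ).2
    rw [show ((Equiv.Perm.decomposeFin σ).1, (Equiv.Perm.decomposeFin σ).2)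
        = Equiv.Perm.decomposeFin σ from rfl, Equiv.Perm.decomposeFin.symm_apply_apply] at h2
    rw [← h2, h]
  rw [extL, ← h1,
    show ((Equiv.Perm.decomposeFin σ).1, (Equiv.Perm.decomposeFin σ).2)
        = Equiv.Perm.decomposeFin σ from rfl, Equiv.Perm.decomposeFin.symm_apply_apply]

lemma decompose_extR (τ : Equiv.Perm (Fin (n+1))) :
    (Equiv.Perm.decomposeFin (extR τ * (finRotate (n+2))⁻¹)).2 = τ := by
  rw [extR, mul_inv_cancel_right, decompose_extL]

lemma extR_decompose {σ : Equiv.Perm (Fin (n+2))} (h : σ (Fin.last (n+1)) = 0) :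
    extR (Equiv.Perm.decomposeFin (σ * (finRotate (n+2))⁻¹)).2 = σ := by
  have hr : (finRotate (n+2))⁻¹ 0 = Fin.last (n+1) := by
    rw [← finRotate_last (n := n+1), Equiv.Perm.inv_def, Equiv.symm_apply_apply]
  have h0 : (σ * (finRotate (n+2))⁻¹) 0 = 0 := by
    rw [Equiv.Perm.mul_apply, hr, h]
  rw [extR, extL_decompose h0, inv_mul_cancel_right]

end Bij

section Prod
variable {A : Type*} [Monoid A] {n : ℕ}

lemma prod_extL (τ : Equiv.Perm (Fin (n+1))) (x : Fin (n+2) → A) :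
    (List.ofFn fun i => x (extL τ i)).prod
      = x 0 * (List.ofFn fun i => x (Fin.succ (τ i))).prod := by
  rw [List.ofFn_succ]
  simp only [extL_zero, extL_succ]
  rw [List.prod_cons]

lemma prod_extR (τ : Equiv.Perm (Fin (n+1))) (x : Fin (n+2) → A) :
    (List.ofFn fun i => x (extR τ i)).prod
      = (List.ofFn fun i => x (Fin.succ (τ i))).prod * x 0 := by
  rw [List.ofFn_succ']
  simp only [extR_castSucc, extR_last]
  rw [List.concat_eq_append, List.prod_append, List.prod_cons, List.prod_nil, mul_one]

end Prod

open scoped Classical in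
lemma key_sum {A : Type*} [Ring A] (q : A) (hq : ∀ a : A, q * a = a * q) {n : ℕ}
    (x : Fin (n+2) → A) :
    (∑ σ : Equiv.Perm (Fin (n+2)),
      if Unimodal σ then ((-q) ^ desNum σ) * (List.ofFn (fun i => x (σ i))).prod else 0)
    = x 0 * (∑ τ : Equiv.Perm (Fin (n+1)),
        if Unimodal τ then
          ((-q) ^ desNum τ) * (List.ofFn (fun i => x (Fin.succ (τ i)))).prod else 0)
      + (-q) * ((∑ τ : Equiv.Perm (Fin (n+1)),
        if Unimodal τ then
          ((-q) ^ desNum τ) * (List.ofFn (fun i => x (Fin.succ (τ i)))).prod else 0) * x 0) := by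
  set f : Equiv.Perm (Fin (n+2)) → A := fun σ =>
    if Unimodal σ then ((-q) ^ desNum σ) * (List.ofFn (fun i => x (σ i))).prod else 0 with hf
  set g : Equiv.Perm (Fin (n+1)) → A := fun τ =>
    if Unimodal τ then
      ((-q) ^ desNum τ) * (List.ofFn (fun i => x (Fin.succ (τ i)))).prod else 0 with hg
  set AL : Finset (Equiv.Perm (Fin (n+2))) := Finset.univ.filter (fun σ => σ 0 = 0) with hAL
  set BR : Finset (Equiv.Perm (Fin (n+2))) :=
    Finset.univ.filter (fun σ => σ (Fin.last (n+1)) = 0) with hBR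
  have hsub : ∀ σ ∈ (Finset.univ : Finset (Equiv.Perm (Fin (n+2)))),
      σ ∉ AL ∪ BR → f σ = 0 := by
    intro σ _ hσ
    rw [Finset.mem_union, hAL, hBR] at hσ
    simp only [Finset.mem_filter, Finset.mem_univ, true_and] at hσ
    push_neg at hσ
    rw [hf]
    simp only
    rw [if_neg]
    intro hu
    rcases unimodal_ends hu with h | h
    · exact hσ.1 h
    · exact hσ.2 h
  have hdisj : Disjoint AL BR := by
    rw [Finset.disjoint_left]
    intro σ hA hB
    rw [hAL, Finset.mem_filter] at hA
    rw [hBR, Finset.mem_filter] at hB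
    have : (0 : Fin (n+2)) = Fin.last (n+1) := σ.injective (hA.2.trans hB.2.symm)
    have := congrArg Fin.val this
    simp [Fin.val_last] at this
  have hA : ∑ σ ∈ AL, f σ = ∑ τ : Equiv.Perm (Fin (n+1)), f (extL τ) := by
    refine (Finset.sum_nbij' (fun σ => (Equiv.Perm.decomposeFin σ).2)
      (fun τ => extL τ) (fun σ _ => Finset.mem_univ _) ?_ ?_ ?_ ?_).symm.symm
    · intro τ _
      rw [hAL, Finset.mem_filter]
      exact ⟨Finset.mem_univ _, extL_zero τ⟩
    · intro σ hσ
      rw [hAL, Finset.mem_filter] at hσ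
      exact extL_decompose hσ.2
    · intro τ _
      exact decompose_extL τ
    · intro σ hσ
      rw [hAL, Finset.mem_filter] at hσ
      rw [extL_decompose hσ.2]
  have hB : ∑ σ ∈ BR, f σ = ∑ τ : Equiv.Perm (Fin (n+1)), f (extR τ) := by
    refine (Finset.sum_nbij'
      (fun σ => (Equiv.Perm.decomposeFin (σ * (finRotate (n+2))⁻¹)).2)
      (fun τ => extR τ) (fun σ _ => Finset.mem_univ _) ?_ ?_ ?_ ?_).symm.symm
    · intro τ _
      rw [hBR, Finset.mem_filter]
      exact ⟨Finset.mem_univ _, extR_last τ⟩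
    · intro σ hσ
      rw [hBR, Finset.mem_filter] at hσ
      exact extR_decompose hσ.2
    · intro τ _
      exact decompose_extR τ
    · intro σ hσ
      rw [hBR, Finset.mem_filter] at hσ
      rw [extR_decompose hσ.2]
  have hAf : ∀ τ : Equiv.Perm (Fin (n+1)), f (extL τ) = x 0 * g τ := by
    intro τ
    rw [hf, hg]
    simp only
    by_cases h : Unimodal τ
    · rw [if_pos ((unimodal_extL τ).mpr h), if_pos h, desNum_extL, prod_extL]
      have hc : Commute ((-q) ^ desNum τ) (x 0) :=
        ((Commute.neg_left (hq (x 0)))).pow_left _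
      rw [← mul_assoc, hc.eq, mul_assoc]
    · rw [if_neg (fun hu => h ((unimodal_extL τ).mp hu)), if_neg h, mul_zero]
  have hBf : ∀ τ : Equiv.Perm (Fin (n+1)), f (extR τ) = (-q) * (g τ * x 0) := by
    intro τ
    rw [hf, hg]
    simp only
    by_cases h : Unimodal τ
    · rw [if_pos ((unimodal_extR τ).mpr h), if_pos h, desNum_extR, prod_extR, pow_succ']
      simp only [mul_assoc]
    · rw [if_neg (fun hu => h ((unimodal_extR τ).mp hu)), if_neg h, zero_mul, mul_zero]
  calc ∑ σ : Equiv.Perm (Fin (n+2)), f σ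
      = ∑ σ ∈ AL ∪ BR, f σ := (Finset.sum_subset (Finset.subset_univ _) hsub).symm
    _ = ∑ σ ∈ AL, f σ + ∑ σ ∈ BR, f σ := Finset.sum_union hdisj
    _ = x 0 * (∑ τ, g τ) + (-q) * ((∑ τ, g τ) * x 0) := by
        rw [hA, hB]
        congr 1
        · rw [Finset.mul_sum]
          exact Finset.sum_congr rfl fun τ _ => hAf τ
        · rw [Finset.sum_mul, Finset.mul_sum]
          exact Finset.sum_congr rfl fun τ _ => hBf τ
lemma iterQBracket_cons {A : Type*} [Ring A] (q a b : A) (l : List A) :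
    iterQBracket q (a :: b :: l)
      = a * iterQBracket q (b :: l) - q * (iterQBracket q (b :: l) * a) := rfl

open scoped Classical in
/-- The iterated `q`-bracket equals `Σ_{σ ∈ Uₙ} (-q)^(des σ) x_(σ(1)) ⋯ x_(σ(n))`
for a central scalar `q`. -/
theorem iterQBracket_eq_sum_unimodal {A : Type*} [Ring A] (q : A)
    (hq : ∀ a : A, q * a = a * q) (n : ℕ) (hn : 1 ≤ n) (x : Fin n → A) :
    iterQBracket q (List.ofFn x) =
      ∑ σ : Equiv.Perm (Fin n),
        if Unimodal σ then
          ((-q) ^ desNum σ) * (List.ofFn (fun i => x (σ i))).prod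
        else 0 := by
  obtain ⟨m, rfl⟩ : ∃ m, n = m + 1 := ⟨n - 1, by omega⟩
  clear hn
  induction m with
  | zero =>
    haveI : Subsingleton (Fin (0+1)) := (inferInstance : Subsingleton (Fin 1))
    have huniq : ∀ σ : Equiv.Perm (Fin (0+1)), σ = 1 := fun σ =>
      Equiv.ext fun i => Subsingleton.elim _ _
    have hu : Unimodal (1 : Equiv.Perm (Fin (0+1))) :=
      ⟨0, fun i _ j _ hij => absurd (Subsingleton.elim i j ▸ hij) (lt_irrefl _),
        fun i _ j _ hij => absurd (Subsingleton.elim i j ▸ hij) (lt_irrefl _)⟩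
    have hd : desNum (1 : Equiv.Perm (Fin (0+1))) = 0 := by
      rw [desNum, Finset.card_eq_zero]
      ext i
      simp only [mem_descents, Finset.notMem_empty, iff_false, not_exists]
      intro j
      have := j.isLt
      have := i.isLt
      rintro ⟨hj, -⟩
      omega
    rw [Finset.sum_eq_single (1 : Equiv.Perm (Fin (0+1)))
      (fun b _ hb => absurd (huniq b) hb) (fun h => absurd (Finset.mem_univ _) h)]
    rw [if_pos hu, hd, pow_zero, one_mul]
    simp [List.ofFn_succ, iterQBracket]
  | succ k ih =>
    have hI : iterQBracket q (List.ofFn fun i : Fin (k+1) => x i.succ)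
        = ∑ τ : Equiv.Perm (Fin (k+1)),
            if Unimodal τ then
              ((-q) ^ desNum τ) * (List.ofFn (fun i => x (Fin.succ (τ i)))).prod
            else 0 := ih _
    have hIB : iterQBracket q (List.ofFn x)
        = x 0 * iterQBracket q (List.ofFn fun i : Fin (k+1) => x i.succ)
          - q * (iterQBracket q (List.ofFn fun i : Fin (k+1) => x i.succ) * x 0) := by
      rw [List.ofFn_succ (f := x), List.ofFn_succ (f := fun i : Fin (k+1) => x i.succ)]
      exact iterQBracket_cons q _ _ _
    have hk : (∑ σ : Equiv.Perm (Fin (k+1+1)),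
          if Unimodal σ then
            ((-q) ^ desNum σ) * (List.ofFn (fun i => x (σ i))).prod
          else 0)
        = x 0 * (∑ τ : Equiv.Perm (Fin (k+1)),
            if Unimodal τ then
              ((-q) ^ desNum τ) * (List.ofFn (fun i => x (Fin.succ (τ i)))).prod else 0)
          + (-q) * ((∑ τ : Equiv.Perm (Fin (k+1)),
            if Unimodal τ then
              ((-q) ^ desNum τ) * (List.ofFn (fun i => x (Fin.succ (τ i)))).prod else 0)
              * x 0) := key_sum q hq x
    rw [hIB, hI, hk, neg_mul, sub_eq_add_neg]
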